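/- Fix reals $q \in (0,1]$, $\mu > 0$, $\gamma > 0$, and define $\mathcal{W}_N = \frac{\log N}{8\log\log N}$, $\mathcal{T}_N = \frac{16(\log\log N)^2}{\gamma\log N}$. Then $\lim_{N\to\infty} \frac{N^{1/2 + \log(8\log\log N)/(2\log\log N)} \, (2q\mu\log\log N)^{\lceil 2\mathcal{W}_N\rceil} \, e^{-q\mu\mathcal{T}_N - \lceil 2\mathcal{W}_N\rceil}}{4(2\gamma)^{2\mathcal{W}_N}(4\pi\mathcal{W}_N)^{1/2}} = \infty$, where real powers $a^b$ are interpreted as $\exp(b\log a)$. -/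

import Mathlib

open Real Filter

noncomputable def llog (N : ℕ) : ℝ := Real.log (Real.log N)
noncomputable def Wc (N : ℕ) : ℝ := Real.log N / (8 * llog N)
noncomputable def Tc (γ : ℝ) (N : ℕ) : ℝ := 16 * (llog N) ^ 2 / (γ * Real.log N)
noncomputable def wc (γ : ℝ) (N : ℕ) : ℝ := γ * Wc N / 2
noncomputable def fc (d γ : ℝ) (N : ℕ) : ℝ :=
  d * (Real.exp ((wc γ N - d) * Tc γ N) - 1) /
    (wc γ N * Real.exp ((wc γ N - d) * Tc γ N) - d)
noncomputable def gc (d γ : ℝ) (N : ℕ) : ℝ :=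
  wc γ N * (Real.exp ((wc γ N - d) * Tc γ N) - 1) /
    (wc γ N * Real.exp ((wc γ N - d) * Tc γ N) - d)

/-! Write `t = log log N` and `n = ⌈2𝒲_N⌉`. Once `2qμt ≥ e` the factor `(2qμt)^n e^{-n}` is at
least `1`, `e^{-qμ𝒯_N} → 1`, and the exponent of `N` is at least `1/2`. In the denominator,
`(2γ)^{2𝒲_N} = N^{log(2γ)/(4t)} ≤ N^{1/8}` eventually, and `𝒲_N ≤ log N = o(N^{1/4})`, so the
expression eventually dominates `N^{1/2 - 1/8 - 1/8} e^{-qμ𝒯_N} → ∞`. -/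

open Topology

lemma tendsto_log_natCast_atTop : Tendsto (fun N : ℕ => log N) atTop atTop :=
  tendsto_log_atTop.comp tendsto_natCast_atTop_atTop

lemma tendsto_llog_atTop : Tendsto llog atTop atTop :=
  tendsto_log_atTop.comp tendsto_log_natCast_atTop

lemma tendsto_Tc_zero (γ : ℝ) : Tendsto (Tc γ) atTop (𝓝 0) := by
  have h := (tendsto_pow_log_div_mul_add_atTop 1 0 2 one_ne_zero).comp tendsto_log_natCast_atTop
  have hTc : Tc γ = fun N => 16 / γ * ((llog N) ^ 2 / log N) := by
    funext N
    simp only [Tc]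
    ring
  simpa [hTc, Function.comp_def, llog] using h.const_mul (16 / γ)

lemma tendsto_rpow_mul_exp_neg_Tc {r : ℝ} (k γ : ℝ) (hr : 0 < r) :
    Tendsto (fun N : ℕ => (N : ℝ) ^ r * exp (-(k * Tc γ N))) atTop atTop := by
  refine ((tendsto_rpow_atTop hr).comp tendsto_natCast_atTop_atTop).atTop_mul_pos one_pos ?_
  have hT := ((tendsto_Tc_zero γ).const_mul k).neg
  rw [mul_zero, neg_zero] at hT
  exact tendsto_exp_nhds_zero_nhds_one.comp hT

lemma one_le_pow_mul_exp_neg {a : ℝ} (ha : exp 1 ≤ a) (n : ℕ) : 1 ≤ a ^ n * exp (-n) :=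
  calc 1 = exp 1 ^ n * exp (-n) := by rw [← exp_nat_mul, ← exp_add]; simp
    _ ≤ a ^ n * exp (-n) := by gcongr

lemma eventually_rpow_two_mul_Wc_le {c : ℝ} (hc : 0 < c) :
    ∀ᶠ N : ℕ in atTop, c ^ (2 * Wc N) ≤ (N : ℝ) ^ (1 / 8 : ℝ) := by
  filter_upwards [tendsto_llog_atTop.eventually_ge_atTop (max 1 (2 * log c)),
    eventually_gt_atTop 0] with N ht hN
  have ht0 : 0 < llog N := lt_of_lt_of_le one_pos (le_of_max_le_left ht)
  have hW : 0 ≤ 2 * Wc N := by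
    have := log_natCast_nonneg N
    unfold Wc
    positivity
  calc c ^ (2 * Wc N) = exp (log c) ^ (2 * Wc N) := by rw [exp_log hc]
    _ ≤ exp (llog N / 2) ^ (2 * Wc N) := by
        gcongr
        linarith [le_of_max_le_right ht]
    _ = (N : ℝ) ^ (1 / 8 : ℝ) := by
        rw [← exp_mul, rpow_def_of_pos (by exact_mod_cast hN), Wc]
        field_simp

lemma eventually_four_mul_sqrt_Wc_le :
    ∀ᶠ N : ℕ in atTop, 4 * √(4 * π * Wc N) ≤ (N : ℝ) ^ (1 / 8 : ℝ) := by
  have hlog := ((isLittleO_log_rpow_atTop (r := 1 / 4) (by norm_num)).comp_tendsto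
    tendsto_natCast_atTop_atTop).bound (c := 1 / (64 * π)) (by positivity)
  filter_upwards [hlog, tendsto_llog_atTop.eventually_ge_atTop 1, eventually_gt_atTop 0]
    with N hlog ht hN
  have hN' : (0 : ℝ) < N := by exact_mod_cast hN
  have hL : 0 ≤ log N := log_natCast_nonneg N
  have hWL : Wc N ≤ log N := div_le_self hL (by linarith)
  simp only [Function.comp_apply, norm_eq_abs, abs_of_nonneg hL,
    abs_of_nonneg (rpow_nonneg hN'.le _)] at hlog
  have hsq : ((N : ℝ) ^ (1 / 8 : ℝ)) ^ 2 = (N : ℝ) ^ (1 / 4 : ℝ) := by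
    rw [← rpow_natCast, ← rpow_mul hN'.le]
    norm_num
  rw [← le_div_iff₀' (by norm_num), sqrt_le_left (by positivity), div_pow, hsq]
  calc 4 * π * Wc N ≤ 4 * π * (1 / (64 * π) * (N : ℝ) ^ (1 / 4 : ℝ)) := by gcongr; linarith
    _ = (N : ℝ) ^ (1 / 4 : ℝ) / 4 ^ 2 := by field_simp; ring

lemma eventually_rpow_half_le :
    ∀ᶠ N : ℕ in atTop,
      (N : ℝ) ^ (1 / 2 : ℝ) ≤ (N : ℝ) ^ (1 / 2 + log (8 * llog N) / (2 * llog N)) := by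
  filter_upwards [tendsto_llog_atTop.eventually_ge_atTop 1, eventually_ge_atTop 1] with N ht hN
  refine rpow_le_rpow_of_exponent_le (by exact_mod_cast hN) (le_add_of_nonneg_right ?_)
  exact div_nonneg (log_nonneg (by linarith)) (by linarith)

theorem stmt_19 (q μ γ : ℝ) (hq : q ∈ Set.Ioc (0:ℝ) 1) (hμ : 0 < μ) (hγ : 0 < γ) :
    Tendsto (fun N : ℕ =>
        Real.rpow (N : ℝ) (1 / 2 + Real.log (8 * llog N) / (2 * llog N)) *
            (2 * q * μ * llog N) ^ (⌈2 * Wc N⌉₊) *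
            Real.exp (-(q * μ * Tc γ N) - (⌈2 * Wc N⌉₊ : ℝ)) /
          (4 * Real.rpow (2 * γ) (2 * Wc N) * Real.sqrt (4 * Real.pi * Wc N)))
      atTop atTop := by
  refine tendsto_atTop_mono' atTop ?_
    (tendsto_rpow_mul_exp_neg_Tc (q * μ) γ (by norm_num : (0 : ℝ) < 1 / 4))
  have hbase : ∀ᶠ N : ℕ in atTop, exp 1 ≤ 2 * q * μ * llog N :=
    (tendsto_llog_atTop.const_mul_atTop (by have := hq.1; positivity)).eventually_ge_atTop _
  filter_upwards [hbase, eventually_rpow_half_le,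
    eventually_rpow_two_mul_Wc_le (by positivity : 0 < 2 * γ), eventually_four_mul_sqrt_Wc_le,
    eventually_gt_atTop 0, tendsto_log_natCast_atTop.eventually_gt_atTop 0,
    tendsto_llog_atTop.eventually_gt_atTop 0] with N hbase hnum hpow hsqrt hN hL ht
  have hN' : (0 : ℝ) < N := by exact_mod_cast hN
  have hW : 0 < Wc N := div_pos hL (by positivity)
  calc (N : ℝ) ^ (1 / 4 : ℝ) * exp (-(q * μ * Tc γ N))
      = (N : ℝ) ^ (1 / 2 : ℝ) / ((N : ℝ) ^ (1 / 8 : ℝ) * (N : ℝ) ^ (1 / 8 : ℝ)) * 1 *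
          exp (-(q * μ * Tc γ N)) := by
        rw [← rpow_add hN', ← rpow_sub hN']
        norm_num
    _ ≤ (N : ℝ) ^ (1 / 2 + log (8 * llog N) / (2 * llog N)) /
          ((2 * γ) ^ (2 * Wc N) * (4 * √(4 * π * Wc N))) *
          ((2 * q * μ * llog N) ^ ⌈2 * Wc N⌉₊ * exp (-(⌈2 * Wc N⌉₊ : ℝ))) *
          exp (-(q * μ * Tc γ N)) := by
        gcongr
        exact one_le_pow_mul_exp_neg hbase _
    _ = _ := by
        rw [sub_eq_add_neg, exp_add, rpow_eq_pow, rpow_eq_pow]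
        ring
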